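/- arXiv:1911.12159 — 3 statements merged into one kernel-verified Lean document; each statement's English description precedes it below -/
import Mathlib

section
/- Let ψ₁ ∈ L²(ℝ) be such that ψ̂₁ is bounded and supported in [−5/4, −1/4] ∪ [1/4, 5/4], and let ψ₂ ∈ L²(ℝ) be such that ψ̂₂ is bounded and supported in [−1, 1]. Define ψ ∈ L²(ℝ²) on the Fourier side by ψ̂(ξ₁, ξ₂) = ψ̂₁(ξ₁) ψ̂₂(ξ₂/ξ₁) for ξ₁ ≠ 0. Then ψ is admissible; more precisely, ∫_{ℝ²} |ψ̂(ξ)|² / ξ₁² dξ = (∫_ℝ |ψ̂₁(r)|² / |r| dr) · (∫_ℝ |ψ̂₂(u)|² du) < ∞. -/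
/-! Fubini, followed for each fixed `ξ₁ ≠ 0` by the substitution `ξ₂ = ξ₁ u` in the inner integral,
turns the double integral into `∫ |ξ₁| ⬝ |ψ̂₁(ξ₁)|² / ξ₁² dξ₁ ⬝ ∫ |ψ̂₂(u)|² du`; the line `ξ₁ = 0`,
where `ξ₂ / ξ₁` takes the junk value `0`, is null. Both factors are finite because their integrands
are bounded on supports of finite measure, the first one since `|ξ₁| ≥ 1/4` on the support of `ψ̂₁`. -/

open MeasureTheory Function
open scoped ENNReal

theorem lintegral_comp_div_const (g : ℝ → ℝ≥0∞) {c : ℝ} (hc : c ≠ 0) :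
    ∫⁻ x, g (x / c) = ENNReal.ofReal |c| * ∫⁻ u, g u := by
  have hemb : MeasurableEmbedding (c⁻¹ * ·) :=
    (Homeomorph.mulLeft₀ c⁻¹ (inv_ne_zero hc)).measurableEmbedding
  simp_rw [div_eq_inv_mul]
  rw [← hemb.lintegral_map, Real.map_volume_mul_left (inv_ne_zero hc), inv_inv,
    lintegral_smul_measure, smul_eq_mul]

theorem lintegral_prod_mul_comp_div {F G : ℝ → ℝ≥0∞} (hF : Measurable F) (hG : Measurable G) :
    ∫⁻ ξ : ℝ × ℝ, F ξ.1 * G (ξ.2 / ξ.1) = (∫⁻ r, ENNReal.ofReal |r| * F r) * ∫⁻ u, G u := by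
  rw [Measure.volume_eq_prod, lintegral_prod _ (by fun_prop), ← lintegral_mul_const _ (by fun_prop)]
  refine lintegral_congr_ae ?_
  filter_upwards [Measure.ae_ne volume 0] with r hr
  rw [lintegral_const_mul _ (by fun_prop), lintegral_comp_div_const G hr, mul_left_comm, mul_assoc]

theorem ofReal_abs_mul_ofReal_div_sq (a r : ℝ) :
    ENNReal.ofReal |r| * ENNReal.ofReal (a / r ^ 2) = ENNReal.ofReal (a / |r|) := by
  rw [← ENNReal.ofReal_mul (abs_nonneg r), ← sq_abs r]
  rcases eq_or_ne r 0 with rfl | hr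
  · simp
  · congr 1
    field_simp

section Finiteness

variable {α E : Type*} [MeasurableSpace α] {μ : Measure α} [NormedAddCommGroup E]

theorem lintegral_ofReal_lt_top_of_support_subset {f : α → ℝ} {s : Set α} {C : ℝ}
    (hs : μ s ≠ ∞) (hf : support f ⊆ s) (hC : ∀ x ∈ s, f x ≤ C) :
    ∫⁻ x, ENNReal.ofReal (f x) ∂μ < ∞ := by
  have hsupp : support (fun x => ENNReal.ofReal (f x)) ⊆ s :=
    (support_comp_subset ENNReal.ofReal_zero f).trans hf
  rw [← setLIntegral_eq_of_support_subset hsupp]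
  exact setLIntegral_lt_top_of_le_nnreal hs
    ⟨C.toNNReal, fun x hx => ENNReal.ofReal_le_ofReal (hC x hx)⟩

theorem lintegral_sq_norm_lt_top_of_support_subset {ψ : α → E} {M : ℝ} {s : Set α}
    (hb : ∀ x, ‖ψ x‖ ≤ M) (hψ : support ψ ⊆ s) (hs : μ s ≠ ∞) :
    ∫⁻ x, ENNReal.ofReal (‖ψ x‖ ^ 2) ∂μ < ∞ :=
  lintegral_ofReal_lt_top_of_support_subset (C := M ^ 2) hs
    (fun x hx => hψ fun h => hx (by simp [h]))
    (fun x _ => pow_le_pow_left₀ (norm_nonneg _) (hb x) 2)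

theorem lintegral_sq_norm_div_abs_lt_top_of_support_subset {ψ : ℝ → E} {M a : ℝ} {s : Set ℝ}
    (hb : ∀ x, ‖ψ x‖ ≤ M) (hψ : support ψ ⊆ s) (hs : volume s ≠ ∞) (ha : 0 < a)
    (has : ∀ x ∈ s, a ≤ |x|) :
    ∫⁻ x, ENNReal.ofReal (‖ψ x‖ ^ 2 / |x|) < ∞ :=
  lintegral_ofReal_lt_top_of_support_subset (C := M ^ 2 / a) hs
    (fun x hx => hψ fun h => hx (by simp [h]))
    (fun x hx =>
      div_le_div₀ (sq_nonneg _) (pow_le_pow_left₀ (norm_nonneg _) (hb x) 2) ha (has x hx))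

end Finiteness

/-- **Admissibility of classical shearlets.**  Let `ψ₁hat = ψ̂₁` be bounded (and measurable,
as is automatic for the Fourier transform of an `L²` function) with support contained in
`[-5/4, -1/4] ∪ [1/4, 5/4]`, and let `ψ₂hat = ψ̂₂` be bounded and measurable with support
contained in `[-1, 1]`.  Define `ψ ∈ L²(ℝ²)` on the Fourier side by
`ψ̂(ξ₁, ξ₂) = ψ̂₁(ξ₁) ψ̂₂(ξ₂/ξ₁)`.  Then `ψ` is admissible; more precisely
`∫_{ℝ²} |ψ̂(ξ)|²/ξ₁² dξ = (∫_ℝ |ψ̂₁(r)|²/|r| dr) ⬝ (∫_ℝ |ψ̂₂(u)|² du) < ∞`. -/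
theorem classical_shearlet_admissible
    (ψ₁hat ψ₂hat : ℝ → ℂ)
    (hm₁ : Measurable ψ₁hat) (hm₂ : Measurable ψ₂hat)
    (M₁ : ℝ) (hb₁ : ∀ r : ℝ, ‖ψ₁hat r‖ ≤ M₁)
    (M₂ : ℝ) (hb₂ : ∀ u : ℝ, ‖ψ₂hat u‖ ≤ M₂)
    (hs₁ : Function.support ψ₁hat ⊆
      Set.Icc (-(5 : ℝ) / 4) (-(1 : ℝ) / 4) ∪ Set.Icc ((1 : ℝ) / 4) ((5 : ℝ) / 4))
    (hs₂ : Function.support ψ₂hat ⊆ Set.Icc (-1 : ℝ) 1) :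
    (∫⁻ ξ : ℝ × ℝ, ENNReal.ofReal (‖ψ₁hat ξ.1 * ψ₂hat (ξ.2 / ξ.1)‖ ^ 2 / ξ.1 ^ 2))
      = (∫⁻ r : ℝ, ENNReal.ofReal (‖ψ₁hat r‖ ^ 2 / |r|)) *
          (∫⁻ u : ℝ, ENNReal.ofReal (‖ψ₂hat u‖ ^ 2)) ∧
    (∫⁻ ξ : ℝ × ℝ, ENNReal.ofReal (‖ψ₁hat ξ.1 * ψ₂hat (ξ.2 / ξ.1)‖ ^ 2 / ξ.1 ^ 2)) < ∞ := by
  have hsplit : ∀ r s : ℝ, ENNReal.ofReal (‖ψ₁hat r * ψ₂hat s‖ ^ 2 / r ^ 2)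
      = ENNReal.ofReal (‖ψ₁hat r‖ ^ 2 / r ^ 2) * ENNReal.ofReal (‖ψ₂hat s‖ ^ 2) := by
    intro r s
    rw [← ENNReal.ofReal_mul (by positivity), norm_mul, mul_pow, div_mul_eq_mul_div, mul_comm]
  have heq : (∫⁻ ξ : ℝ × ℝ, ENNReal.ofReal (‖ψ₁hat ξ.1 * ψ₂hat (ξ.2 / ξ.1)‖ ^ 2 / ξ.1 ^ 2))
      = (∫⁻ r : ℝ, ENNReal.ofReal (‖ψ₁hat r‖ ^ 2 / |r|)) *
          (∫⁻ u : ℝ, ENNReal.ofReal (‖ψ₂hat u‖ ^ 2)) := by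
    simp_rw [hsplit]
    rw [lintegral_prod_mul_comp_div (F := fun r => ENNReal.ofReal (‖ψ₁hat r‖ ^ 2 / r ^ 2))
      (G := fun s => ENNReal.ofReal (‖ψ₂hat s‖ ^ 2)) (by fun_prop) (by fun_prop)]
    simp_rw [ofReal_abs_mul_ofReal_div_sq]
  have hband : ∀ r ∈ Set.Icc (-(5 : ℝ) / 4) (-(1 : ℝ) / 4) ∪ Set.Icc ((1 : ℝ) / 4) ((5 : ℝ) / 4),
      1 / 4 ≤ |r| := by
    rintro r (⟨-, h⟩ | ⟨h, -⟩)
    · exact le_abs.mpr (Or.inr (by linarith))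
    · exact le_abs.mpr (Or.inl h)
  refine ⟨heq, heq ▸ ENNReal.mul_lt_top ?_ ?_⟩
  · exact lintegral_sq_norm_div_abs_lt_top_of_support_subset hb₁ hs₁
      (measure_union_ne_top (by simp) (by simp)) (by norm_num) hband
  · exact lintegral_sq_norm_lt_top_of_support_subset hb₂ hs₂ (by simp)
end

section
/- Let f ∈ L¹(ℝ²). Then for every θ ∈ [0, π] and almost every p ∈ ℝ, the function s ↦ f(p ω(θ) + s ω(θ)^⊥) is integrable (so Rf(θ, p) is defined for a.e. p), the function (θ, p) ↦ Rf(θ, p) is measurable, and ∫_0^π ∫_ℝ |Rf(θ, p)| dp dθ ≤ π ‖f‖_{L¹(ℝ²)}. In particular, the Radon transform is a continuous linear map from L¹(ℝ²) to L¹([0,π] × ℝ). -/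
open MeasureTheory
open scoped ENNReal

/-!
Substituting `x = R_θ (p, s)` with the rotation `R_θ`, the line integral `Rf(θ, p)` is the inner
integral of `f ∘ R_θ` over `ℝ × ℝ`. Rotations preserve Lebesgue measure, so by Fubini–Tonelli
`∫ |Rf(θ, p)| dp ≤ ‖f ∘ R_θ‖₁ = ‖f‖₁` for every `θ`, and integrating over `θ ∈ [0, π]` gives the
factor `π`. Joint measurability in `(θ, p)` holds because `(θ, x) ↦ R_θ x` is continuous and each
`R_θ` preserves null sets.
-/

/-- The rotation `(p, s) ↦ p ω(θ) + s ω(θ)^⊥` of the plane. -/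
noncomputable def planeRotation (θ : ℝ) : (ℝ × ℝ) →ₗ[ℝ] ℝ × ℝ where
  toFun x := (x.1 * Real.cos θ - x.2 * Real.sin θ, x.1 * Real.sin θ + x.2 * Real.cos θ)
  map_add' x y := by
    simp only [Prod.fst_add, Prod.snd_add, Prod.mk_add_mk]
    congr 1 <;> ring
  map_smul' c x := by
    simp only [Prod.smul_fst, Prod.smul_snd, smul_eq_mul, RingHom.id_apply, Prod.smul_mk]
    congr 1 <;> ring

theorem det_planeRotation (θ : ℝ) : LinearMap.det (planeRotation θ) = 1 := by
  rw [← LinearMap.det_toMatrix (Module.Basis.finTwoProd ℝ), Matrix.det_fin_two]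
  simp [LinearMap.toMatrix_apply, planeRotation, Module.Basis.finTwoProd, ← sq]

theorem measurePreserving_planeRotation (θ : ℝ) :
    MeasurePreserving (planeRotation θ) volume volume := by
  refine ⟨(planeRotation θ).continuous_of_finiteDimensional.measurable, ?_⟩
  rw [Measure.map_linearMap_addHaar_eq_smul_addHaar volume (by simp [det_planeRotation]),
    det_planeRotation]
  simp

theorem quasiMeasurePreserving_uncurry_planeRotation :
    Measure.QuasiMeasurePreserving (fun z : ℝ × (ℝ × ℝ) => planeRotation z.1 z.2)
      (volume.prod volume) volume := by
  refine QuasiMeasurePreserving.prod_of_right ?_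
    (ae_of_all _ fun θ => (measurePreserving_planeRotation θ).quasiMeasurePreserving)
  refine Continuous.measurable ?_
  simp only [planeRotation, LinearMap.coe_mk, AddHom.coe_mk]
  fun_prop

namespace MeasureTheory

variable {E : Type*} [NormedAddCommGroup E] {f : ℝ × ℝ → E}

theorem lintegral_enorm_integral_le_lintegral_enorm_prod {α β : Type*} [MeasurableSpace α]
    [MeasurableSpace β] {μ : Measure α} {ν : Measure β} [SFinite ν] [NormedSpace ℝ E]
    {g : α × β → E}
    (hg : AEStronglyMeasurable g (μ.prod ν)) :
    ∫⁻ x, ‖∫ y, g (x, y) ∂ν‖ₑ ∂μ ≤ ∫⁻ z, ‖g z‖ₑ ∂μ.prod ν :=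
  calc ∫⁻ x, ‖∫ y, g (x, y) ∂ν‖ₑ ∂μ ≤ ∫⁻ x, ∫⁻ y, ‖g (x, y)‖ₑ ∂ν ∂μ :=
        lintegral_mono fun _ => enorm_integral_le_lintegral_enorm _
    _ = ∫⁻ z, ‖g z‖ₑ ∂μ.prod ν := (lintegral_prod _ hg.enorm).symm

theorem Integrable.ae_integrable_planeRotation (hf : Integrable f) (θ : ℝ) :
    ∀ᵐ p : ℝ, Integrable fun s : ℝ => f (planeRotation θ (p, s)) :=
  ((measurePreserving_planeRotation θ).integrable_comp_of_integrable hf).prod_right_ae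

theorem lintegral_enorm_integral_planeRotation_le [NormedSpace ℝ E]
    (hf : AEStronglyMeasurable f) (θ : ℝ) :
    ∫⁻ p : ℝ, ‖∫ s : ℝ, f (planeRotation θ (p, s))‖ₑ ≤ ∫⁻ x, ‖f x‖ₑ := by
  have hmp := measurePreserving_planeRotation θ
  calc ∫⁻ p : ℝ, ‖∫ s : ℝ, f (planeRotation θ (p, s))‖ₑ
      ≤ ∫⁻ x, ‖(f ∘ planeRotation θ) x‖ₑ :=
        lintegral_enorm_integral_le_lintegral_enorm_prod (hf.comp_measurePreserving hmp)
    _ = ∫⁻ x, ‖f x‖ₑ := by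
        simpa only [eLpNorm_one_eq_lintegral_enorm] using
          eLpNorm_comp_measurePreserving (p := 1) hf hmp

theorem AEStronglyMeasurable.integral_planeRotation [NormedSpace ℝ E]
    (hf : AEStronglyMeasurable f) :
    AEStronglyMeasurable (fun q : ℝ × ℝ => ∫ s : ℝ, f (planeRotation q.1 (q.2, s))) := by
  have hΦ := hf.comp_quasiMeasurePreserving quasiMeasurePreserving_uncurry_planeRotation
  have h : AEStronglyMeasurable
      ((f ∘ fun z : ℝ × (ℝ × ℝ) => planeRotation z.1 z.2) ∘ MeasurableEquiv.prodAssoc)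
      ((volume.prod volume).prod volume) :=
    hΦ.comp_quasiMeasurePreserving
      (measurePreserving_prodAssoc volume volume volume).quasiMeasurePreserving
  exact h.integral_prod_right'

end MeasureTheory

/-- **The Radon transform is a continuous linear map `L¹(ℝ²) → L¹([0,π] × ℝ)`.**
For `f ∈ L¹(ℝ²)` and `Rf(θ,p) = ∫ f(p ω(θ) + s ω(θ)^⊥) ds` (with `ω(θ) = (cos θ, sin θ)`,
`ω(θ)^⊥ = (-sin θ, cos θ)`): for every `θ ∈ [0,π]` and almost every `p`, the integrand is
integrable in `s`; `(θ,p) ↦ Rf(θ,p)` is (a.e. strongly) measurable; and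
`∫₀^π ∫_ℝ |Rf(θ,p)| dp dθ ≤ π ‖f‖_{L¹}`. -/
theorem radon_transform_L1_continuous (f : ℝ × ℝ → ℂ) (hf : Integrable f volume) :
    (∀ θ ∈ Set.Icc (0 : ℝ) Real.pi, ∀ᵐ p : ℝ ∂volume,
      Integrable (fun s : ℝ =>
        f (p * Real.cos θ - s * Real.sin θ, p * Real.sin θ + s * Real.cos θ)) volume) ∧
    AEStronglyMeasurable (fun q : ℝ × ℝ =>
      ∫ s : ℝ, f (q.2 * Real.cos q.1 - s * Real.sin q.1,
        q.2 * Real.sin q.1 + s * Real.cos q.1)) volume ∧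
    (∫⁻ θ in Set.Icc (0 : ℝ) Real.pi, ∫⁻ p : ℝ,
        (‖∫ s : ℝ, f (p * Real.cos θ - s * Real.sin θ,
            p * Real.sin θ + s * Real.cos θ)‖₊ : ℝ≥0∞))
      ≤ ENNReal.ofReal Real.pi * ∫⁻ x : ℝ × ℝ, (‖f x‖₊ : ℝ≥0∞) := by
  refine ⟨fun θ _ => hf.ae_integrable_planeRotation θ,
    hf.aestronglyMeasurable.integral_planeRotation, ?_⟩
  calc _ ≤ ∫⁻ _ in Set.Icc (0 : ℝ) Real.pi, ∫⁻ x, ‖f x‖ₑ :=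
        lintegral_mono (lintegral_enorm_integral_planeRotation_le hf.aestronglyMeasurable)
    _ = ENNReal.ofReal Real.pi * ∫⁻ x, ‖f x‖ₑ := by
        rw [setLIntegral_const, Real.volume_Icc, sub_zero, mul_comm]
end

section
/- The normal operator of the Radon transform is convolution with 2/|x|: for every continuous compactly supported f : ℝ² → ℂ and every x ∈ ℝ², R^*(Rf)(x) = ∫_{ℝ²} (2 / ‖x − y‖) f(y) dy, where R^*(Rf)(x) = ∫_0^{2π} Rf(θ, x·ω(θ)) dθ. -/
/-!
Both sides equal twice the integral over all directions of the ray integrals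
`∫₀^∞ f(x + r ω(θ)) dr`. The line `{y | y · ω(θ) = x · ω(θ)}` passes through `x`, so it is the
union of the rays from `x` in the directions `θ ± π/2`, and integrating over a full period of `θ`
absorbs both shifts. On the other side, polar coordinates centred at `x` cancel the kernel
`1/‖x - y‖` against the Jacobian `r`.
-/

open MeasureTheory Real Set

-- `ℝ × ℝ` carries the sup norm; the factor `2` comes from `1 ≤ |cos θ| + |sin θ|`.
lemma abs_le_two_mul_norm_polar (r θ : ℝ) : |r| ≤ 2 * ‖((r * cos θ, r * sin θ) : ℝ × ℝ)‖ := by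
  have hcs : 1 ≤ |cos θ| + |sin θ| := by
    nlinarith [abs_cos_le_one θ, abs_sin_le_one θ, abs_nonneg (cos θ), abs_nonneg (sin θ),
      sq_abs (cos θ), sq_abs (sin θ), cos_sq_add_sin_sq θ]
  have h1 := norm_fst_le ((r * cos θ, r * sin θ) : ℝ × ℝ)
  have h2 := norm_snd_le ((r * cos θ, r * sin θ) : ℝ × ℝ)
  simp only [Real.norm_eq_abs, abs_mul] at h1 h2
  nlinarith [abs_nonneg r]

section

variable {E : Type*} [NormedAddCommGroup E]

lemma HasCompactSupport.exists_polar_eq_zero {f : ℝ × ℝ → E} (hsupp : HasCompactSupport f)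
    (x : ℝ × ℝ) : ∃ R, ∀ r θ, R < |r| → f (x.1 + r * cos θ, x.2 + r * sin θ) = 0 := by
  obtain ⟨M, hM⟩ := hsupp.isBounded.subset_closedBall x
  refine ⟨2 * M, fun r θ hr => image_eq_zero_of_notMem_tsupport fun hmem => ?_⟩
  have hdist := Metric.mem_closedBall.mp (hM hmem)
  have hv : (x.1 + r * cos θ, x.2 + r * sin θ) - x = (r * cos θ, r * sin θ) := by ext <;> simp
  rw [dist_eq_norm, hv] at hdist
  linarith [abs_le_two_mul_norm_polar r θ]

variable {f : ℝ × ℝ → E} (hf : Continuous f) (hsupp : HasCompactSupport f)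
include hf hsupp

lemma integrable_line_of_hasCompactSupport (x : ℝ × ℝ) (θ : ℝ) :
    Integrable fun s : ℝ => f (x.1 + s * cos θ, x.2 + s * sin θ) := by
  obtain ⟨R, hR⟩ := hsupp.exists_polar_eq_zero x
  refine (hf.comp (by fun_prop)).integrable_of_hasCompactSupport
    (HasCompactSupport.intro (isCompact_Icc (a := -R) (b := R)) fun s hs => hR s θ ?_)
  rw [mem_Icc, ← abs_le] at hs
  exact not_le.mp hs

lemma integrableOn_polar_of_hasCompactSupport (x : ℝ × ℝ) (a b : ℝ) :
    IntegrableOn (fun p : ℝ × ℝ => f (x.1 + p.1 * cos p.2, x.2 + p.1 * sin p.2))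
      (univ ×ˢ Icc a b) := by
  obtain ⟨R, hR⟩ := hsupp.exists_polar_eq_zero x
  have hcont : Continuous fun p : ℝ × ℝ => f (x.1 + p.1 * cos p.2, x.2 + p.1 * sin p.2) := by
    fun_prop
  have hbox : IntegrableOn (fun p : ℝ × ℝ => f (x.1 + p.1 * cos p.2, x.2 + p.1 * sin p.2))
      (Icc (-R) R ×ˢ Icc a b) :=
    hcont.continuousOn.integrableOn_compact (isCompact_Icc.prod isCompact_Icc)
  refine hbox.of_forall_sdiff_eq_zero (MeasurableSet.univ.prod measurableSet_Icc) ?_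
  rintro ⟨r, θ⟩ ⟨⟨-, hθ⟩, hnot⟩
  refine hR r θ (not_le.mp fun hr => hnot ⟨?_, hθ⟩)
  rwa [mem_Icc, ← abs_le]

end

section

variable {E : Type*} [NormedAddCommGroup E] [NormedSpace ℝ E]

noncomputable def radon (f : ℝ × ℝ → E) (θ p : ℝ) : E :=
  ∫ s, f (p * cos θ - s * sin θ, p * sin θ + s * cos θ)

noncomputable def rayIntegral (f : ℝ × ℝ → E) (x : ℝ × ℝ) (θ : ℝ) : E :=
  ∫ r in Ioi 0, f (x.1 + r * cos θ, x.2 + r * sin θ)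

lemma rayIntegral_periodic (f : ℝ × ℝ → E) (x : ℝ × ℝ) :
    Function.Periodic (rayIntegral f x) (2 * π) := fun θ => by
  simp only [rayIntegral, cos_add_two_pi, sin_add_two_pi]

lemma Function.Periodic.intervalIntegral_comp_add_right_eq {g : ℝ → E} {T : ℝ}
    (hg : Function.Periodic g T) (t c : ℝ) :
    ∫ θ in t..t + T, g (θ + c) = ∫ θ in t..t + T, g θ := by
  rw [intervalIntegral.integral_comp_add_right, add_right_comm]
  exact hg.intervalIntegral_add_eq _ _

lemma radon_eq_integral_line (f : ℝ × ℝ → E) (x : ℝ × ℝ) (θ : ℝ) :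
    radon f θ (x.1 * cos θ + x.2 * sin θ)
      = ∫ s, f (x.1 + s * cos (θ + π / 2), x.2 + s * sin (θ + π / 2)) := by
  -- translate by the coordinate of `x` along the line, `x · ω(θ)^⊥`
  rw [cos_add_pi_div_two, sin_add_pi_div_two,
    ← integral_add_right_eq_self _ (x.1 * sin θ - x.2 * cos θ)]
  refine congrArg _ (funext fun s => congrArg f (Prod.ext ?_ ?_))
  · linear_combination x.1 * sin_sq_add_cos_sq θ
  · linear_combination x.2 * sin_sq_add_cos_sq θ

variable {f : ℝ × ℝ → E} (hf : Continuous f) (hsupp : HasCompactSupport f)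
include hf hsupp

lemma intervalIntegrable_rayIntegral (x : ℝ × ℝ) (a b : ℝ) :
    IntervalIntegrable (rayIntegral f x) volume a b := by
  have h := (integrableOn_polar_of_hasCompactSupport hf hsupp x (a ⊓ b) (a ⊔ b)).mono_set
    (prod_mono (subset_univ (Ioi 0)) subset_rfl)
  rw [IntegrableOn, Measure.volume_eq_prod, ← Measure.prod_restrict] at h
  exact IntegrableOn.intervalIntegrable (μ := volume) h.integral_prod_right

lemma integral_line_eq_rayIntegral_add (x : ℝ × ℝ) (θ : ℝ) :
    ∫ s, f (x.1 + s * cos θ, x.2 + s * sin θ) = rayIntegral f x θ + rayIntegral f x (θ + π) := by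
  have hint := integrable_line_of_hasCompactSupport hf hsupp x θ
  have hreflect := integral_comp_neg_Ioi 0 fun s => f (x.1 + s * cos θ, x.2 + s * sin θ)
  rw [neg_zero] at hreflect
  rw [← intervalIntegral.integral_Iic_add_Ioi (b := 0) hint.integrableOn hint.integrableOn,
    add_comm, ← hreflect]
  simp only [rayIntegral, cos_add_pi, sin_add_pi, neg_mul, mul_neg]

lemma radon_eq_rayIntegral_add (x : ℝ × ℝ) (θ : ℝ) :
    radon f θ (x.1 * cos θ + x.2 * sin θ)
      = rayIntegral f x (θ + π / 2) + rayIntegral f x (θ + π / 2 + π) := by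
  rw [radon_eq_integral_line, integral_line_eq_rayIntegral_add hf hsupp]

lemma integral_radon_eq_two_smul_integral_rayIntegral (x : ℝ × ℝ) :
    ∫ θ in Icc 0 (2 * π), radon f θ (x.1 * cos θ + x.2 * sin θ)
      = (2 : ℝ) • ∫ θ in 0..2 * π, rayIntegral f x θ := by
  have hshift (c : ℝ) : ∫ θ in 0..2 * π, rayIntegral f x (θ + c)
      = ∫ θ in 0..2 * π, rayIntegral f x θ := by
    simpa using (rayIntegral_periodic f x).intervalIntegral_comp_add_right_eq 0 c
  have hint (c : ℝ) : IntervalIntegrable (fun θ => rayIntegral f x (θ + c)) volume 0 (2 * π) := by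
    simpa using (intervalIntegrable_rayIntegral hf hsupp x c (2 * π + c)).comp_add_right c
  rw [integral_Icc_eq_integral_Ioc, ← intervalIntegral.integral_of_le two_pi_pos.le]
  simp_rw [radon_eq_rayIntegral_add hf hsupp x, add_assoc]
  rw [intervalIntegral.integral_add (hint _) (hint _), hshift, hshift, two_smul]

lemma integral_inv_dist_smul_eq_integral_rayIntegral (x : ℝ × ℝ) :
    ∫ y, (√((x.1 - y.1) ^ 2 + (x.2 - y.2) ^ 2))⁻¹ • f y
      = ∫ θ in 0..2 * π, rayIntegral f x θ := by
  set G : ℝ × ℝ → E := fun p => f (x.1 + p.1 * cos p.2, x.2 + p.1 * sin p.2)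
  have hG : Integrable G ((volume.restrict (Ioi 0)).prod (volume.restrict (Ioo (-π) π))) := by
    rw [Measure.prod_restrict, ← Measure.volume_eq_prod]
    exact (integrableOn_polar_of_hasCompactSupport hf hsupp x (-π) π).mono_set
      (prod_mono (subset_univ _) Ioo_subset_Icc_self)
  have hpolar : ∀ p ∈ polarCoord.target,
      p.1 • ((√((polarCoord.symm p).1 ^ 2 + (polarCoord.symm p).2 ^ 2))⁻¹
        • f (x + polarCoord.symm p)) = G p := by
    rintro ⟨r, θ⟩ hp
    have hr : 0 < r := by rw [polarCoord_target] at hp; exact hp.1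
    have hnorm : √((r * cos θ) ^ 2 + (r * sin θ) ^ 2) = r := by
      rw [show (r * cos θ) ^ 2 + (r * sin θ) ^ 2 = r ^ 2 by
        linear_combination r ^ 2 * cos_sq_add_sin_sq θ, sqrt_sq hr.le]
    simp only [polarCoord_symm_apply, hnorm, smul_smul, mul_inv_cancel₀ hr.ne', one_smul]
    rfl
  calc ∫ y, (√((x.1 - y.1) ^ 2 + (x.2 - y.2) ^ 2))⁻¹ • f y
      = ∫ y, (√(y.1 ^ 2 + y.2 ^ 2))⁻¹ • f (x + y) := by
        rw [← integral_add_left_eq_self _ x]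
        simp
    _ = ∫ p in polarCoord.target, G p := by
        rw [← integral_comp_polarCoord_symm]
        exact setIntegral_congr_fun polarCoord.open_target.measurableSet hpolar
    _ = ∫ θ in Ioo (-π) π, rayIntegral f x θ := by
        rw [polarCoord_target, Measure.volume_eq_prod, ← Measure.prod_restrict,
          integral_prod_symm _ hG]
        rfl
    _ = ∫ θ in 0..2 * π, rayIntegral f x θ := by
        rw [← integral_Ioc_eq_integral_Ioo,
          ← intervalIntegral.integral_of_le (by linarith [pi_pos])]
        simpa [two_mul] using (rayIntegral_periodic f x).intervalIntegral_add_eq (-π) 0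

end

/-- **The normal operator `R*R` of the Radon transform is convolution with `2/|x|`.**
For every continuous compactly supported `f : ℝ² → ℂ` and every `x ∈ ℝ²`,
`R*(Rf)(x) = ∫_{ℝ²} (2/‖x-y‖) f(y) dy`, where
`R*(Rf)(x) = ∫₀^{2π} Rf(θ, x·ω(θ)) dθ`,
`Rf(θ,p) = ∫ f(p ω(θ) + s ω(θ)^⊥) ds`, `ω(θ) = (cos θ, sin θ)`,
`ω(θ)^⊥ = (-sin θ, cos θ)`, and `‖·‖` is the Euclidean norm. -/
theorem radon_normal_operator (f : ℝ × ℝ → ℂ) (hf : Continuous f)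
    (hsupp : HasCompactSupport f) (x : ℝ × ℝ) :
    (∫ θ in Set.Icc (0 : ℝ) (2 * Real.pi), ∫ s : ℝ,
        f ((x.1 * Real.cos θ + x.2 * Real.sin θ) * Real.cos θ - s * Real.sin θ,
           (x.1 * Real.cos θ + x.2 * Real.sin θ) * Real.sin θ + s * Real.cos θ))
      = ∫ y : ℝ × ℝ,
          ((2 / Real.sqrt ((x.1 - y.1) ^ 2 + (x.2 - y.2) ^ 2) : ℝ) : ℂ) * f y := by
  change ∫ θ in Icc 0 (2 * π), radon f θ (x.1 * cos θ + x.2 * sin θ) = _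
  have hkernel (y : ℝ × ℝ) : ((2 / √((x.1 - y.1) ^ 2 + (x.2 - y.2) ^ 2) : ℝ) : ℂ) * f y
      = (2 : ℝ) • ((√((x.1 - y.1) ^ 2 + (x.2 - y.2) ^ 2))⁻¹ • f y) := by
    simp only [Complex.real_smul, div_eq_mul_inv]
    push_cast
    ring
  simp_rw [hkernel, integral_smul, integral_inv_dist_smul_eq_integral_rayIntegral hf hsupp,
    integral_radon_eq_two_smul_integral_rayIntegral hf hsupp]
end
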